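/- Let d ≥ 1, sample sizes n i ≥ 1 with total N = Σ_i n i, and let X i k : Ω → ℝ (for i ∈ Fin d, k ∈ Fin (n i)) be random variables on a probability space (Ω, P) that are mutually independent and identically distributed (all with the same law). Then for every i and k, the expected rank and the expected pseudo-rank both equal (N+1)/2: ∫ R i k(ω) dP(ω) = ∫ Rψ i k(ω) dP(ω) = (N+1)/2, where R i k(ω) and Rψ i k(ω) are the rank and pseudo-rank computed from the realized observations X r ℓ(ω). -/

import Mathlib

/-! For independent `X, Y` with a common law, swapping them preserves the joint law, so
`E c(X - Y) = E c(Y - X)`; since `c(u) + c(-u) = 1` both equal `1/2`, and for `X = Y` the value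
is `c(0) = 1/2` as well. By linearity the expected rank is `1/2 + N/2`, and the expected
pseudo-rank is `1/2 + (N/d) · d · 1/2`, because the `r`-th group contributes `(1/n r) · n r/2`. -/

open Finset

/-- The count function: c(u) = 0, 1/2, 1 according as u < 0, u = 0, u > 0. -/
noncomputable def cnt (u : ℝ) : ℝ := if u < 0 then 0 else if u = 0 then 1/2 else 1

/-- The (mid-)rank of the observation `X i k` among all observations. -/
noncomputable def rnk {d : ℕ} (n : Fin d → ℕ) (X : ∀ i : Fin d, Fin (n i) → ℝ)
    (i : Fin d) (k : Fin (n i)) : ℝ :=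
  1/2 + ∑ r : Fin d, ∑ l : Fin (n r), cnt (X i k - X r l)

/-- The pseudo-rank of the observation `X i k` among all observations. -/
noncomputable def psrnk {d : ℕ} (n : Fin d → ℕ) (X : ∀ i : Fin d, Fin (n i) → ℝ)
    (i : Fin d) (k : Fin (n i)) : ℝ :=
  1/2 + ((∑ r : Fin d, (n r : ℝ)) / (d : ℝ)) *
    ∑ r : Fin d, (1 / (n r : ℝ)) * ∑ l : Fin (n r), cnt (X i k - X r l)

open MeasureTheory ProbabilityTheory

lemma measurable_cnt : Measurable cnt :=
  Measurable.ite (measurableSet_lt measurable_id measurable_const) measurable_const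
    (Measurable.ite (measurableSet_eq_fun measurable_id measurable_const)
      measurable_const measurable_const)

lemma norm_cnt_le_one (u : ℝ) : ‖cnt u‖ ≤ 1 := by
  unfold cnt
  split_ifs <;> norm_num

lemma cnt_zero : cnt 0 = 1/2 := by simp [cnt]

lemma cnt_add_cnt_neg (u : ℝ) : cnt u + cnt (-u) = 1 := by
  unfold cnt
  rcases lt_trichotomy u 0 with h | rfl | h
  · simp [h, h.ne, h.not_gt]
  · norm_num
  · simp [h.not_gt, h.ne', h]

lemma integrable_cnt_comp {α : Type*} [MeasurableSpace α] {μ : Measure α} [IsFiniteMeasure μ]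
    {f : α → ℝ} (hf : AEMeasurable f μ) : Integrable (fun x => cnt (f x)) μ :=
  .of_bound (measurable_cnt.comp_aemeasurable hf).aestronglyMeasurable 1
    (.of_forall fun x => norm_cnt_le_one (f x))

lemma integral_cnt_sub_prod_self (μ : Measure ℝ) [IsProbabilityMeasure μ] :
    ∫ p : ℝ × ℝ, cnt (p.1 - p.2) ∂(μ.prod μ) = 1/2 := by
  have hswap : ∫ p : ℝ × ℝ, cnt (p.2 - p.1) ∂(μ.prod μ)
      = ∫ p : ℝ × ℝ, cnt (p.1 - p.2) ∂(μ.prod μ) :=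
    integral_prod_swap fun p : ℝ × ℝ => cnt (p.1 - p.2)
  have hsum : ∫ p : ℝ × ℝ, (cnt (p.1 - p.2) + cnt (p.2 - p.1)) ∂(μ.prod μ) = 1 := by
    have h1 (p : ℝ × ℝ) : cnt (p.1 - p.2) + cnt (p.2 - p.1) = 1 := by
      simpa [neg_sub] using cnt_add_cnt_neg (p.1 - p.2)
    simp [h1]
  rw [integral_add (integrable_cnt_comp (by fun_prop)) (integrable_cnt_comp (by fun_prop)),
    hswap] at hsum
  linarith

lemma integral_cnt_sub_of_indepFun {Ω : Type*} [MeasurableSpace Ω] {P : Measure Ω}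
    [IsProbabilityMeasure P] {X Y : Ω → ℝ} (hX : AEMeasurable X P) (hY : AEMeasurable Y P)
    (hXY : IndepFun X Y P) (hlaw : P.map Y = P.map X) :
    ∫ ω, cnt (X ω - Y ω) ∂P = 1/2 := by
  have : IsProbabilityMeasure (P.map X) := Measure.isProbabilityMeasure_map hX
  have hjoint : P.map (fun ω => (X ω, Y ω)) = (P.map X).prod (P.map X) := by
    rw [(indepFun_iff_map_prod_eq_prod_map_map hX hY).mp hXY, hlaw]
  calc ∫ ω, cnt (X ω - Y ω) ∂P
      = ∫ p : ℝ × ℝ, cnt (p.1 - p.2) ∂(P.map fun ω => (X ω, Y ω)) :=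
        (integral_map (hX.prodMk hY) (measurable_cnt.comp
          (measurable_fst.sub measurable_snd)).aestronglyMeasurable).symm
    _ = 1/2 := by rw [hjoint, integral_cnt_sub_prod_self]

section Linearity

variable {Ω : Type*} [MeasurableSpace Ω] {P : Measure Ω} [IsProbabilityMeasure P] {d : ℕ}
  {n : Fin d → ℕ} {X : ∀ i : Fin d, Fin (n i) → Ω → ℝ}

lemma integral_rnk (hX : ∀ r l, AEMeasurable (X r l) P) (i : Fin d) (k : Fin (n i)) :
    ∫ ω, rnk n (fun r l => X r l ω) i k ∂P
      = 1/2 + ∑ r, ∑ l, ∫ ω, cnt (X i k ω - X r l ω) ∂P := by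
  have hint r l : Integrable (fun ω => cnt (X i k ω - X r l ω)) P :=
    integrable_cnt_comp ((hX i k).sub (hX r l))
  unfold rnk
  rw [integral_add (integrable_const _) (integrable_finsetSum _ fun r _ =>
      integrable_finsetSum _ fun l _ => hint r l),
    integral_finsetSum _ fun r _ => integrable_finsetSum _ fun l _ => hint r l]
  simp [integral_finsetSum _ fun l _ => hint _ l]

lemma integral_psrnk (hX : ∀ r l, AEMeasurable (X r l) P) (i : Fin d) (k : Fin (n i)) :
    ∫ ω, psrnk n (fun r l => X r l ω) i k ∂P
      = 1/2 + ((∑ r, (n r : ℝ)) / d) *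
        ∑ r, (1 / (n r : ℝ)) * ∑ l, ∫ ω, cnt (X i k ω - X r l ω) ∂P := by
  have hint r l : Integrable (fun ω => cnt (X i k ω - X r l ω)) P :=
    integrable_cnt_comp ((hX i k).sub (hX r l))
  have hint' r : Integrable (fun ω => (1 / (n r : ℝ)) * ∑ l, cnt (X i k ω - X r l ω)) P :=
    (integrable_finsetSum _ fun l _ => hint r l).const_mul _
  unfold psrnk
  rw [integral_add (integrable_const _) ((integrable_finsetSum _ fun r _ => hint' r).const_mul _),
    integral_const_mul, integral_finsetSum _ fun r _ => hint' r]
  simp [integral_const_mul, integral_finsetSum _ fun l _ => hint _ l]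

end Linearity

theorem expected_rank_pseudorank_iid_general {d : ℕ} (n : Fin d → ℕ) (hn : ∀ i, 1 ≤ n i)
    (N : ℕ) (hN : N = ∑ i : Fin d, n i)
    {Ω : Type*} [MeasurableSpace Ω] (P : Measure Ω) [IsProbabilityMeasure P]
    (X : ∀ i : Fin d, Fin (n i) → Ω → ℝ)
    (hmeas : ∀ i k, Measurable (X i k))
    (hindep : iIndepFun (m := fun _ : Σ i : Fin d, Fin (n i) => Real.measurableSpace)
      (fun p : Σ i : Fin d, Fin (n i) => X p.1 p.2) P)
    (μ : Measure ℝ) (hid : ∀ i k, Measure.map (X i k) P = μ)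
    (i : Fin d) (k : Fin (n i)) :
    (∫ ω, rnk n (fun r l => X r l ω) i k ∂P) = ((N : ℝ) + 1) / 2 ∧
    (∫ ω, psrnk n (fun r l => X r l ω) i k ∂P) = ((N : ℝ) + 1) / 2 := by
  have hpair r l : ∫ ω, cnt (X i k ω - X r l ω) ∂P = 1/2 := by
    by_cases h : (⟨r, l⟩ : Σ j, Fin (n j)) = ⟨i, k⟩
    · cases h
      simp [cnt_zero]
    · exact integral_cnt_sub_of_indepFun (hmeas i k).aemeasurable (hmeas r l).aemeasurable
        (hindep.indepFun fun he => h he.symm) ((hid r l).trans (hid i k).symm)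
  have hN' : (∑ r, (n r : ℝ)) = N := by simp [hN]
  have hgroup r : 1 / (n r : ℝ) * (n r * (1/2)) = 1/2 := by
    have : (n r : ℝ) ≠ 0 := Nat.cast_ne_zero.mpr (Nat.one_le_iff_ne_zero.mp (hn r))
    field_simp
  have hd : (d : ℝ) ≠ 0 := Nat.cast_ne_zero.mpr (Fin.pos i).ne'
  constructor
  · rw [integral_rnk fun r l => (hmeas r l).aemeasurable]
    simp only [hpair, sum_const, card_univ, Fintype.card_fin, nsmul_eq_mul, ← sum_mul, hN']
    ring
  · rw [integral_psrnk fun r l => (hmeas r l).aemeasurable]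
    simp only [hpair, sum_const, card_univ, Fintype.card_fin, nsmul_eq_mul, hgroup, hN']
    field_simp
    ring

/-- For i.i.d. observations, the expected rank and expected pseudo-rank of each
observation equal `(N+1)/2`. -/
theorem expected_rank_pseudorank_iid {d : ℕ} (hd : 1 ≤ d) (n : Fin d → ℕ) (hn : ∀ i, 1 ≤ n i)
    (N : ℕ) (hN : N = ∑ i : Fin d, n i)
    {Ω : Type*} [MeasurableSpace Ω] (P : Measure Ω) [IsProbabilityMeasure P]
    (X : ∀ i : Fin d, Fin (n i) → Ω → ℝ)
    (hmeas : ∀ i k, Measurable (X i k))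
    (hindep : iIndepFun (m := fun _ : Σ i : Fin d, Fin (n i) => Real.measurableSpace)
      (fun p : Σ i : Fin d, Fin (n i) => X p.1 p.2) P)
    (μ : Measure ℝ) (hid : ∀ i k, Measure.map (X i k) P = μ)
    (i : Fin d) (k : Fin (n i)) :
    (∫ ω, rnk n (fun r l => X r l ω) i k ∂P) = ((N : ℝ) + 1) / 2 ∧
    (∫ ω, psrnk n (fun r l => X r l ω) i k ∂P) = ((N : ℝ) + 1) / 2 :=
  expected_rank_pseudorank_iid_general n hn N hN P X hmeas hindep μ hid i k
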